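/- Consider the two-strategy game (r = 2) on a graph with n = |V| vertices, and let ε > 0. Let s : V → Fin 2 be a strategy profile that is stable under good-enough improvements, i.e., for every vertex i, if s^(i) denotes the profile obtained from s by flipping i's strategy, then Φ₁(s^(i)) − Φ₁(s) ≤ (2ε/n) · Φ₁(s). Then (2 + ε) · Φ₁(s) ≥ W, where W = Σ over unordered pairs {i,j} of t(i,j) is the total tie-strength. -/

import Mathlib

/-!
With two strategies, flipping vertex `i` changes `Φ₁` by `t_i - 2 a_i`. Summing the
stability inequalities over all `n` vertices and using `Σ t_i = 2W`, `Σ a_i = 2Φ₁` gives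
`2W - 4Φ₁ ≤ 2εΦ₁`.
-/

open Finset

/-- Tie-strength of a pair of vertices: for adjacent pairs it is the edge weight plus the
sum, over common neighbours `k`, of `w i k + w j k`; it is `0` for non-adjacent pairs. -/
noncomputable def tieStrength {V : Type*} [Fintype V] (G : SimpleGraph V) [DecidableRel G.Adj]
    (w : V → V → ℝ) (i j : V) : ℝ :=
  if G.Adj i j then
    w i j + ∑ k : V, (if G.Adj i k ∧ G.Adj j k then w i k + w j k else 0)
  else 0

/-- `t_i`: the sum of the tie-strengths of the edges adjacent to `i`. -/
noncomputable def tieTotal {V : Type*} [Fintype V] (G : SimpleGraph V) [DecidableRel G.Adj]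
    (w : V → V → ℝ) (i : V) : ℝ :=
  ∑ j : V, tieStrength G w i j

/-- The agreement weight `a_i(s)` of vertex `i` in profile `s`:
the sum of tie-strengths `t(i,j)` over the vertices `j` choosing the same strategy as `i`. -/
noncomputable def agreeWeight {V : Type*} [Fintype V] (G : SimpleGraph V) [DecidableRel G.Adj]
    (w : V → V → ℝ) {r : ℕ} (s : V → Fin r) (i : V) : ℝ :=
  ∑ j : V, if s j = s i then tieStrength G w i j else 0

/-- The utility `u_i(s) = a_i(s) / t_i` of player `i`. -/
noncomputable def utility1 {V : Type*} [Fintype V] (G : SimpleGraph V) [DecidableRel G.Adj]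
    (w : V → V → ℝ) {r : ℕ} (s : V → Fin r) (i : V) : ℝ :=
  agreeWeight G w s i / tieTotal G w i

/-- The potential `Φ₁(s)`: the sum of tie-strengths over unordered edges whose endpoints
choose the same strategy, i.e. `(1/2) Σ_i Σ_{j : s j = s i} t(i,j)`. -/
noncomputable def phi1 {V : Type*} [Fintype V] (G : SimpleGraph V) [DecidableRel G.Adj]
    (w : V → V → ℝ) {r : ℕ} (s : V → Fin r) : ℝ :=
  (1 / 2) * ∑ i : V, ∑ j : V, if s j = s i then tieStrength G w i j else 0

/-- The total tie-strength `W` of the network: the sum of `t(i,j)` over unordered pairs. -/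
noncomputable def totalTie {V : Type*} [Fintype V] (G : SimpleGraph V) [DecidableRel G.Adj]
    (w : V → V → ℝ) : ℝ :=
  (1 / 2) * ∑ i : V, ∑ j : V, tieStrength G w i j

section SymmetricDoubleSum

variable {V R : Type*} [Fintype V] [DecidableEq V] [CommRing R]

theorem sum_sum_eq_of_eq_zero_of_ne_of_ne (d : V → V → R) (i : V)
    (hsymm : ∀ a b, d a b = d b a) (hzero : ∀ a b, a ≠ i → b ≠ i → d a b = 0) :
    ∑ a, ∑ b, d a b = 2 * ∑ b, d i b - d i i := by
  have hrow : ∀ a ∈ univ.erase i, ∑ b, d a b = d a i := fun a ha =>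
    sum_eq_single i (fun b _ hb => hzero a b (ne_of_mem_erase ha) hb) (by simp)
  have hcol : ∑ a ∈ univ.erase i, d a i = ∑ b, d i b - d i i := by
    rw [← add_sum_erase _ _ (mem_univ i)]
    simp only [hsymm _ i, add_sub_cancel_left]
  rw [← add_sum_erase _ _ (mem_univ i), sum_congr rfl hrow, hcol]
  ring

/-- Changing the label of the single vertex `i` only changes the terms of the agreement
double sum in row and column `i`, which by symmetry contribute twice the row. -/
theorem sum_sum_ite_update_sub {α : Type*} [DecidableEq α] (t : V → V → R)
    (ht : ∀ a b, t a b = t b a) (s : V → α) (i : V) (c : α) :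
    (∑ a, ∑ b, if Function.update s i c b = Function.update s i c a then t a b else 0)
      - ∑ a, ∑ b, (if s b = s a then t a b else 0)
      = 2 * ∑ b, ((if Function.update s i c b = c then t i b else 0)
          - if s b = s i then t i b else 0) := by
  set s' := Function.update s i c
  set d : V → V → R := fun a b =>
    (if s' b = s' a then t a b else 0) - if s b = s a then t a b else 0
  have hsymm : ∀ a b, d a b = d b a := fun a b => by simp only [d, ht a b, eq_comm]
  have hzero : ∀ a b, a ≠ i → b ≠ i → d a b = 0 := fun a b ha hb => by
    simp [d, s', Function.update_of_ne ha, Function.update_of_ne hb]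
  have hdiag : d i i = 0 := by simp [d]
  simp only [← sum_sub_distrib]
  rw [sum_sum_eq_of_eq_zero_of_ne_of_ne d i hsymm hzero, hdiag, sub_zero]
  simp [d, s']

end SymmetricDoubleSum

section TieStrength

variable {V : Type*} [Fintype V] (G : SimpleGraph V) [DecidableRel G.Adj] (w : V → V → ℝ)

theorem tieStrength_comm (hw_symm : ∀ i j, w i j = w j i) (i j : V) :
    tieStrength G w i j = tieStrength G w j i := by
  unfold tieStrength
  by_cases h : G.Adj i j
  · simp only [if_pos h, if_pos h.symm, hw_symm i j, and_comm (a := G.Adj i _), add_comm (w i _)]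
  · rw [if_neg h, if_neg (mt G.adj_symm h)]

@[simp]
theorem tieStrength_self (i : V) : tieStrength G w i i = 0 := by
  simp [tieStrength]

theorem sum_tieTotal : ∑ i, tieTotal G w i = 2 * totalTie G w := by
  simp only [tieTotal, totalTie]
  ring

theorem sum_agreeWeight {r : ℕ} (s : V → Fin r) :
    ∑ i, agreeWeight G w s i = 2 * phi1 G w s := by
  simp only [agreeWeight, phi1]
  ring

variable [DecidableEq V]

theorem phi1_update_sub (hw_symm : ∀ i j, w i j = w j i) {r : ℕ} (s : V → Fin r) (i : V)
    (c : Fin r) :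
    phi1 G w (Function.update s i c) - phi1 G w s
      = ∑ j, ((if Function.update s i c j = c then tieStrength G w i j else 0)
          - if s j = s i then tieStrength G w i j else 0) := by
  rw [phi1, phi1, ← mul_sub, sum_sum_ite_update_sub _ (tieStrength_comm G w hw_symm)]
  ring

/-- With two strategies, flipping `i` turns its agreeing edges into disagreeing ones and
vice versa. -/
theorem phi1_flip_sub (hw_symm : ∀ i j, w i j = w j i) (s : V → Fin 2) (i : V) :
    phi1 G w (Function.update s i (s i + 1)) - phi1 G w s
      = tieTotal G w i - 2 * agreeWeight G w s i := by
  have hfin2 : ∀ x y : Fin 2, x = y + 1 ↔ x ≠ y := by decide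
  rw [phi1_update_sub G w hw_symm, tieTotal, agreeWeight, mul_sum, ← sum_sub_distrib]
  refine sum_congr rfl fun j _ => ?_
  rcases eq_or_ne j i with rfl | hji
  · simp
  · by_cases hj : s j = s i
    · simp [Function.update_of_ne hji, hfin2, hj]
      ring
    · simp [Function.update_of_ne hji, hfin2, hj]

end TieStrength

theorem good_enough_stable_phi1_bound_general {V : Type*} [Fintype V] [DecidableEq V]
    (G : SimpleGraph V) [DecidableRel G.Adj] (w : V → V → ℝ)
    (hw_symm : ∀ i j, w i j = w j i)
    (hn : 1 ≤ Fintype.card V)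
    (ε : ℝ)
    (s : V → Fin 2)
    (hstable : ∀ i : V,
      phi1 G w (Function.update s i (s i + 1)) - phi1 G w s
        ≤ (2 * ε / (Fintype.card V : ℝ)) * phi1 G w s) :
    (2 + ε) * phi1 G w s ≥ totalTie G w := by
  have hflip : ∀ i, tieTotal G w i - 2 * agreeWeight G w s i
      ≤ 2 * ε / (Fintype.card V : ℝ) * phi1 G w s := fun i =>
    phi1_flip_sub G w hw_symm s i ▸ hstable i
  have hsum := sum_le_sum fun i (_ : i ∈ univ) => hflip i
  have hscale : (Fintype.card V : ℝ) * (2 * ε / Fintype.card V * phi1 G w s)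
      = 2 * ε * phi1 G w s := by
    have : (Fintype.card V : ℝ) ≠ 0 := Nat.cast_ne_zero.2 (by omega)
    field_simp
  rw [sum_sub_distrib, ← mul_sum, sum_tieTotal, sum_agreeWeight, sum_const, card_univ,
    nsmul_eq_mul, hscale] at hsum
  linarith

/-- In the two-strategy game (`r = 2`), if `s` is stable under
good-enough improvements, i.e. flipping any single vertex's strategy increases `Φ₁` by at
most `(2ε/n)·Φ₁(s)`, then `(2 + ε)·Φ₁(s) ≥ W` where `W` is the total tie-strength. -/
theorem good_enough_stable_phi1_bound {V : Type*} [Fintype V] [DecidableEq V]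
    (G : SimpleGraph V) [DecidableRel G.Adj] (w : V → V → ℝ)
    (hw_nonneg : ∀ i j, 0 ≤ w i j)
    (hw_symm : ∀ i j, w i j = w j i)
    (hw_diag : ∀ i, w i i = 0)
    (hw_adj : ∀ i j, ¬ G.Adj i j → w i j = 0)
    (hn : 1 ≤ Fintype.card V)
    (ε : ℝ) (hε : 0 < ε)
    (s : V → Fin 2)
    (hstable : ∀ i : V,
      phi1 G w (Function.update s i (s i + 1)) - phi1 G w s
        ≤ (2 * ε / (Fintype.card V : ℝ)) * phi1 G w s) :
    (2 + ε) * phi1 G w s ≥ totalTie G w :=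
  good_enough_stable_phi1_bound_general G w hw_symm hn ε s hstable
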